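/- arXiv:1512.07424 — 4 statements merged into one kernel-verified Lean document; each statement's English description precedes it below -/
import Mathlib

section
/- (Corollary 3.2) The Lebesgue constant is bounded by Λ ≤ C · D · √e · n / |det V|, where e is Euler's number and D = ( max{ √( min_{1≤i≤n} c_i² / Π_{i=1}^n c_i² ), √( min_{1≤i≤n} r_i² / Π_{i=1}^n r_i² ) } )^{-1}, with c_i² = Σ_{j=1}^n |φ_j(x_i)|² (the squared ℓ²-norm of the i-th column of V) and r_i² = Σ_{j=1}^n |φ_i(x_j)|² (the squared ℓ²-norm of the i-th row of V). -/
/-!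
Let `ρᵢ` be the Euclidean norm of the `i`-th row of `V⁻¹`. By Cauchy–Schwarz,
`|ℓᵢ(y)| ≤ ρᵢ ‖φ(y)‖ ≤ ρᵢ C`, so `Λ ≤ C ∑ᵢ ρᵢ`. Replacing the `i`-th column of `V` by the
`i`-th row of `adj V` gives a matrix of determinant `‖(adj V)ᵢ‖²`, so Hadamard's inequality
bounds `|det V| ρᵢ = ‖(adj V)ᵢ‖` by the product of the other column norms of `V`, hence by
`√(∏ c / min c)`; summing gives `∑ᵢ ρᵢ ≤ n √(∏ c / min c) / |det V|`. The same argument for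
`Vᵀ` bounds the columns of `V⁻¹` through `r`, and Cauchy–Schwarz turns this into
`∑ᵢ ρᵢ ≤ n √(∏ r / min r) / |det V|`. Hence `Λ ≤ C D n / |det V|`, and `√e ≥ 1`.
-/

open MvPolynomial Finset
open scoped Matrix

theorem lt_ciInf_of_finite {ι α : Type*} [Finite ι] [Nonempty ι]
    [ConditionallyCompleteLinearOrder α] {f : ι → α} {a : α} (hf : ∀ i, a < f i) :
    a < ⨅ i, f i := by
  obtain ⟨i, hi⟩ := exists_eq_ciInf_of_finite (f := f)
  exact hi ▸ hf i

theorem inv_max_inv_eq_min {α : Type*} [Field α] [LinearOrder α] [IsStrictOrderedRing α]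
    {a b : α} (ha : 0 < a) (hb : 0 < b) : (max a⁻¹ b⁻¹)⁻¹ = min a b := by
  rcases le_total a b with h | h
  · rw [max_eq_left (inv_anti₀ ha h), inv_inv, min_eq_left h]
  · rw [max_eq_right (inv_anti₀ hb h), inv_inv, min_eq_right h]

theorem prod_erase_le_prod_div_iInf {ι : Type*} [Fintype ι] [DecidableEq ι] {c : ι → ℝ}
    (hc : ∀ i, 0 < c i) (i : ι) : ∏ k ∈ univ.erase i, c k ≤ (∏ k, c k) / ⨅ k, c k := by
  have : Nonempty ι := ⟨i⟩
  obtain ⟨i₀, hi₀⟩ := exists_eq_ciInf_of_finite (f := c)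
  rw [← hi₀, ← mul_prod_erase univ c (mem_univ i), le_div_iff₀ (hc i₀), mul_comm]
  exact mul_le_mul_of_nonneg_right (hi₀ ▸ ciInf_le (Finite.bddBelow_range c) i)
    (prod_nonneg fun k _ => (hc k).le)

theorem IsCompact.le_ciSup_of_continuousOn {X α : Type*} [TopologicalSpace X]
    [ConditionallyCompleteLinearOrder α] [TopologicalSpace α] [ClosedIciTopology α]
    {K : Set X} (hK : IsCompact K) {f : X → α} (hf : ContinuousOn f K) (y : K) :
    f y ≤ ⨆ z : K, f z := by
  have hbdd := hK.bddAbove_image hf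
  rw [Set.image_eq_range] at hbdd
  exact le_ciSup hbdd y

namespace Matrix

theorem abs_det_le_prod_sqrt_sum_sq_col {n : ℕ} (A : Matrix (Fin n) (Fin n) ℝ) :
    |A.det| ≤ ∏ j, √(∑ i, A i j ^ 2) := by
  let b := EuclideanSpace.basisFun (Fin n) ℝ
  let v : Fin n → EuclideanSpace ℝ (Fin n) := fun j => WithLp.toLp 2 fun i => A i j
  have : Fact (Module.finrank ℝ (EuclideanSpace ℝ (Fin n)) = n) := ⟨by simp⟩
  have hdet : b.toBasis.det v = A.det := by rw [Module.Basis.det_apply]; rfl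
  have := b.toBasis.orientation.abs_volumeForm_apply_le v
  rw [Orientation.volumeForm_robust _ b rfl, hdet] at this
  simpa [v, EuclideanSpace.norm_eq] using this

theorem sqrt_sum_sq_adjugate_row_le {n : ℕ} (A : Matrix (Fin n) (Fin n) ℝ) (i : Fin n) :
    √(∑ j, A.adjugate i j ^ 2) ≤ ∏ k ∈ univ.erase i, √(∑ j, A j k ^ 2) := by
  set s := ∑ j, A.adjugate i j ^ 2
  set P := ∏ k ∈ univ.erase i, √(∑ j, A j k ^ 2)
  have hdet : (A.updateCol i (A.adjugate i)).det = s := by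
    rw [← cramer_apply, cramer_eq_adjugate_mulVec]
    simp only [mulVec, dotProduct, s, sq]
  have hH := (A.updateCol i (A.adjugate i)).abs_det_le_prod_sqrt_sum_sq_col
  rw [hdet, ← mul_prod_erase univ _ (mem_univ i)] at hH
  have hP : ∏ k ∈ univ.erase i, √(∑ j, A.updateCol i (A.adjugate i) j k ^ 2) = P :=
    prod_congr rfl fun k hk => by simp only [updateCol_ne (ne_of_mem_erase hk)]
  simp only [updateCol_self, hP] at hH
  change |s| ≤ √s * P at hH
  have hsq : √s * √s ≤ √s * P := by
    rw [Real.mul_self_sqrt (sum_nonneg fun j _ => sq_nonneg _)]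
    exact (le_abs_self s).trans hH
  rcases (Real.sqrt_nonneg s).eq_or_lt with h | h
  · exact h ▸ prod_nonneg fun _ _ => Real.sqrt_nonneg _
  · exact le_of_mul_le_mul_left hsq h

theorem sum_sq_inv_row_le {n : ℕ} (A : Matrix (Fin n) (Fin n) ℝ) (i : Fin n) :
    ∑ j, A⁻¹ i j ^ 2 ≤ (∏ k ∈ univ.erase i, ∑ j, A j k ^ 2) / A.det ^ 2 := by
  have hadj := A.sqrt_sum_sq_adjugate_row_le i
  rw [← Real.sqrt_prod _ fun k _ => sum_nonneg fun j _ => sq_nonneg _,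
    Real.sqrt_le_sqrt_iff (prod_nonneg fun k _ => sum_nonneg fun j _ => sq_nonneg _)] at hadj
  simp only [inv_def, Ring.inverse_eq_inv', smul_apply, smul_eq_mul, mul_pow, ← mul_sum]
  rw [inv_pow, inv_mul_eq_div]
  gcongr

theorem sum_sq_inv_col_le {n : ℕ} (A : Matrix (Fin n) (Fin n) ℝ) (j : Fin n) :
    ∑ i, A⁻¹ i j ^ 2 ≤ (∏ k ∈ univ.erase j, ∑ i, A k i ^ 2) / A.det ^ 2 := by
  simpa [det_transpose, ← transpose_nonsing_inv] using Aᵀ.sum_sq_inv_row_le j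

theorem sum_sq_col_pos {n : ℕ} {A : Matrix (Fin n) (Fin n) ℝ} (hA : A.det ≠ 0)
    (k : Fin n) : 0 < ∑ j, A j k ^ 2 := by
  refine (sum_nonneg fun j _ => sq_nonneg _).lt_of_ne fun h => hA ?_
  exact det_eq_zero_of_column_eq_zero k fun j =>
    pow_eq_zero_iff two_ne_zero |>.1 <|
      (sum_eq_zero_iff_of_nonneg fun j _ => sq_nonneg _).1 h.symm j (mem_univ j)

theorem sum_sq_row_pos {n : ℕ} {A : Matrix (Fin n) (Fin n) ℝ} (hA : A.det ≠ 0)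
    (k : Fin n) : 0 < ∑ j, A k j ^ 2 :=
  sum_sq_col_pos (A := Aᵀ) (by rwa [det_transpose]) k

theorem sum_sqrt_sum_sq_row_le {n : ℕ} (B : Matrix (Fin n) (Fin n) ℝ) {N : ℝ}
    (hN : ∀ j, ∑ i, B i j ^ 2 ≤ N) : ∑ i, √(∑ j, B i j ^ 2) ≤ n * √N := by
  calc ∑ i, √(∑ j, B i j ^ 2) = ∑ i : Fin n, √1 * √(∑ j, B i j ^ 2) := by simp
  _ ≤ √(∑ i : Fin n, 1) * √(∑ i, ∑ j, B i j ^ 2) :=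
    Real.sum_sqrt_mul_sqrt_le _ (fun _ => zero_le_one) fun i => sum_nonneg fun j _ => sq_nonneg _
  _ = √n * √(∑ j, ∑ i, B i j ^ 2) := by rw [sum_comm]; simp
  _ ≤ √n * √(n * N) := by
    gcongr
    simpa using sum_le_card_nsmul univ _ N fun j _ => hN j
  _ = n * √N := by
    rw [Real.sqrt_mul n.cast_nonneg, ← mul_assoc, Real.mul_self_sqrt n.cast_nonneg]

theorem sum_abs_mulVec_le {m n : ℕ} (B : Matrix (Fin m) (Fin n) ℝ) (v : Fin n → ℝ) :
    ∑ i, |∑ j, B i j * v j| ≤ (∑ i, √(∑ j, B i j ^ 2)) * √(∑ j, v j ^ 2) := by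
  rw [sum_mul]
  gcongr with i
  calc |∑ j, B i j * v j| ≤ ∑ j, |B i j| * |v j| :=
        (abs_sum_le_sum_abs _ _).trans_eq (by simp only [abs_mul])
  _ ≤ _ := by
    simpa only [sq_abs] using Real.sum_mul_le_sqrt_mul_sqrt univ (|B i ·|) (|v ·|)

theorem sum_sqrt_sum_sq_inv_row_le_col_prod {n : ℕ} {A : Matrix (Fin n) (Fin n) ℝ}
    (hA : A.det ≠ 0) : ∑ i, √(∑ j, A⁻¹ i j ^ 2) ≤
      n * (√((∏ k, ∑ j, A j k ^ 2) / ⨅ k, ∑ j, A j k ^ 2) / |A.det|) := by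
  have hrow : ∀ i, √(∑ j, A⁻¹ i j ^ 2) ≤
      √((∏ k, ∑ j, A j k ^ 2) / ⨅ k, ∑ j, A j k ^ 2) / |A.det| := by
    intro i
    rw [← Real.sqrt_sq_eq_abs, ← Real.sqrt_div' _ (sq_nonneg _)]
    exact Real.sqrt_le_sqrt <| (A.sum_sq_inv_row_le i).trans <|
      div_le_div_of_nonneg_right (prod_erase_le_prod_div_iInf (sum_sq_col_pos hA) i) (sq_nonneg _)
  simpa using sum_le_card_nsmul univ _ _ fun i _ => hrow i

theorem sum_sqrt_sum_sq_inv_row_le_row_prod {n : ℕ} {A : Matrix (Fin n) (Fin n) ℝ}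
    (hA : A.det ≠ 0) : ∑ i, √(∑ j, A⁻¹ i j ^ 2) ≤
      n * (√((∏ k, ∑ j, A k j ^ 2) / ⨅ k, ∑ j, A k j ^ 2) / |A.det|) := by
  rw [← Real.sqrt_sq_eq_abs, ← Real.sqrt_div' _ (sq_nonneg _)]
  exact A⁻¹.sum_sqrt_sum_sq_row_le fun j => (A.sum_sq_inv_col_le j).trans <|
    div_le_div_of_nonneg_right (prod_erase_le_prod_div_iInf (sum_sq_row_pos hA) j) (sq_nonneg _)

theorem sum_sqrt_sum_sq_inv_row_le {n : ℕ} [Nonempty (Fin n)]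
    {A : Matrix (Fin n) (Fin n) ℝ} (hA : A.det ≠ 0) {c r : Fin n → ℝ}
    (hc : ∀ k, c k = ∑ j, A j k ^ 2) (hr : ∀ k, r k = ∑ j, A k j ^ 2) :
    ∑ i, √(∑ j, A⁻¹ i j ^ 2) ≤
      n * ((max √((⨅ k, c k) / ∏ k, c k) √((⨅ k, r k) / ∏ k, r k))⁻¹ / |A.det|) := by
  have hpos : ∀ {f : Fin n → ℝ}, (∀ k, 0 < f k) → 0 < √((∏ k, f k) / ⨅ k, f k) := fun hf =>
    Real.sqrt_pos.2 <| div_pos (prod_pos fun k _ => hf k) (lt_ciInf_of_finite hf)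
  rw [← inv_div (∏ k, c k), Real.sqrt_inv, ← inv_div (∏ k, r k), Real.sqrt_inv,
    inv_max_inv_eq_min (hpos fun k => hc k ▸ sum_sq_col_pos hA k)
      (hpos fun k => hr k ▸ sum_sq_row_pos hA k),
    ← min_div_div_right (abs_nonneg _), mul_min_of_nonneg _ _ n.cast_nonneg]
  simp only [hc, hr]
  exact le_min (sum_sqrt_sum_sq_inv_row_le_col_prod hA)
    (sum_sqrt_sum_sq_inv_row_le_row_prod hA)

end Matrix

theorem stmt_3_general
    (d n : ℕ) (hn : 0 < n)
    (x : Fin n → (Fin d → ℝ))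
    (φ : Fin n → MvPolynomial (Fin d) ℝ)
    (V : Matrix (Fin n) (Fin n) ℝ)
    (hV : ∀ i j, V i j = eval (x j) (φ i))
    (hdet : V.det ≠ 0)
    (K : Set (Fin d → ℝ)) (hK : K = convexHull ℝ (Set.range x))
    (ℓ : Fin n → (Fin d → ℝ) → ℝ)
    (hℓ : ∀ i y, ℓ i y = ∑ j, V⁻¹ i j * eval y (φ j))
    (C : ℝ)
    (hC : C = ⨆ y : K, Real.sqrt (∑ i, (eval (y : Fin d → ℝ) (φ i)) ^ 2))
    (Λ : ℝ)
    (hΛ : Λ = ⨆ y : K, ∑ i, |ℓ i (y : Fin d → ℝ)|)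
    (c r : Fin n → ℝ)
    (hc : ∀ i, c i = ∑ j, (eval (x i) (φ j)) ^ 2)
    (hr : ∀ i, r i = ∑ j, (eval (x j) (φ i)) ^ 2)
    (D : ℝ)
    (hD : D = (max (Real.sqrt ((⨅ i, c i) / ∏ i, c i))
        (Real.sqrt ((⨅ i, r i) / ∏ i, r i)))⁻¹) :
    Λ ≤ C * D * Real.sqrt (Real.exp 1) * n / |V.det| := by
  have : Nonempty (Fin n) := ⟨⟨0, hn⟩⟩
  have hρ : ∑ i, √(∑ j, V⁻¹ i j ^ 2) ≤ n * (D / |V.det|) := hD ▸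
    Matrix.sum_sqrt_sum_sq_inv_row_le hdet (fun k => by simp only [hc, hV])
      (fun k => by simp only [hr, hV])
  have hφC : ∀ y : K, √(∑ i, eval (y : Fin d → ℝ) (φ i) ^ 2) ≤ C := hC ▸
    (hK ▸ (Set.finite_range x).isCompact_convexHull ℝ).le_ciSup_of_continuousOn
      (f := fun y => √(∑ i, eval y (φ i) ^ 2)) (Real.continuous_sqrt.comp <|
        continuous_finsetSum _ fun i _ => (continuous_eval (φ i)).pow 2).continuousOn
  have hC0 : 0 ≤ C := hC ▸ Real.iSup_nonneg fun _ => Real.sqrt_nonneg _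
  have hD0 : 0 ≤ D := hD ▸ inv_nonneg.2 ((Real.sqrt_nonneg _).trans (le_max_left _ _))
  have he : 1 ≤ √(Real.exp 1) := Real.one_le_sqrt.2 (Real.one_le_exp zero_le_one)
  rw [hΛ]
  refine Real.iSup_le (fun y => ?_) (by positivity)
  calc ∑ i, |ℓ i y|
      ≤ (∑ i, √(∑ j, V⁻¹ i j ^ 2)) * √(∑ j, eval (y : Fin d → ℝ) (φ j) ^ 2) := by
        simpa only [hℓ] using V⁻¹.sum_abs_mulVec_le fun j => eval (y : Fin d → ℝ) (φ j)
  _ ≤ n * (D / |V.det|) * C := mul_le_mul hρ (hφC y) (Real.sqrt_nonneg _) (by positivity)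
  _ = C * D * 1 * n / |V.det| := by ring
  _ ≤ C * D * √(Real.exp 1) * n / |V.det| := by gcongr

/-- Corollary 3.2: the Lebesgue constant is bounded by `Λ ≤ C * D * √e * n / |det V|`, where
`D = (max { √(min_i c i / ∏ i, c i), √(min_i r i / ∏ i, r i) })⁻¹` with `c i` the squared
`ℓ²`-norm of the `i`-th column of `V` and `r i` the squared `ℓ²`-norm of the `i`-th row. -/
theorem stmt_3
    (d n : ℕ) (hd : 0 < d) (hn : 0 < n)
    (x : Fin n → (Fin d → ℝ)) (hx : Function.Injective x)
    (φ : Fin n → MvPolynomial (Fin d) ℝ)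
    (V : Matrix (Fin n) (Fin n) ℝ)
    (hV : ∀ i j, V i j = eval (x j) (φ i))
    (hdet : V.det ≠ 0)
    (K : Set (Fin d → ℝ)) (hK : K = convexHull ℝ (Set.range x))
    (ℓ : Fin n → (Fin d → ℝ) → ℝ)
    (hℓ : ∀ i y, ℓ i y = ∑ j, V⁻¹ i j * eval y (φ j))
    (C : ℝ)
    (hC : C = ⨆ y : K, Real.sqrt (∑ i, (eval (y : Fin d → ℝ) (φ i)) ^ 2))
    (Λ : ℝ)
    (hΛ : Λ = ⨆ y : K, ∑ i, |ℓ i (y : Fin d → ℝ)|)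
    (c r : Fin n → ℝ)
    (hc : ∀ i, c i = ∑ j, (eval (x i) (φ j)) ^ 2)
    (hr : ∀ i, r i = ∑ j, (eval (x j) (φ i)) ^ 2)
    (D : ℝ)
    (hD : D = (max (Real.sqrt ((⨅ i, c i) / ∏ i, c i))
        (Real.sqrt ((⨅ i, r i) / ∏ i, r i)))⁻¹) :
    Λ ≤ C * D * Real.sqrt (Real.exp 1) * n / |V.det| :=
  stmt_3_general d n hn x φ V hV hdet K hK ℓ hℓ C hC Λ hΛ c r hc hr D hD
end

section
/- (Proposition 3.3, first inequality) The Lebesgue constant of the extended interpolation system satisfies Λ' ≤ Λ + ‖ℓ'_{n+1}‖_{L∞(K)} · (1 + Λ), i.e. sup_{x∈K} Σ_{i=1}^{n+1} |ℓ'_i(x)| ≤ Λ + (sup_{x∈K} |ℓ'_{n+1}(x)|)·(1 + Λ). -/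
open MvPolynomial

/-!
Writing `ℓᵢ(x_{n+1}) =: Lᵢ`, the extended Lagrange functions are `ℓ'ᵢ = ℓᵢ - Lᵢ ℓ'_{n+1}` for
`i ≤ n`: both sides lie in the span of `φ₁, …, φ_{n+1}` and take the values `δᵢⱼ` at all `n + 1`
nodes, and unisolvence (`det V' ≠ 0`) makes such a function unique. Hence pointwise
`∑ᵢ |ℓ'ᵢ| ≤ ∑ᵢ |ℓᵢ| + |ℓ'_{n+1}| (1 + ∑ᵢ |Lᵢ|)`, and `∑ᵢ |Lᵢ| ≤ Λ` because `x_{n+1} ∈ K`.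
-/

theorem IsCompact.le_iSup_of_continuous {α : Type*} [TopologicalSpace α] {K : Set α}
    (hK : IsCompact K) {f : α → ℝ} (hf : Continuous f) {y : α} (hy : y ∈ K) :
    f y ≤ ⨆ z : K, f z :=
  le_ciSup (by simpa [Set.image_eq_range] using hK.bddAbove_image hf.continuousOn) (⟨y, hy⟩ : K)

namespace Interpolation

section Field

variable {ι α 𝕜 : Type*} [Fintype ι] [DecidableEq ι] [Field 𝕜]

noncomputable def vandermonde (φ : ι → α → 𝕜) (x : ι → α) : Matrix ι ι 𝕜 :=
  Matrix.of fun i j => φ i (x j)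

noncomputable def lagrange (φ : ι → α → 𝕜) (x : ι → α) (i : ι) (y : α) : 𝕜 :=
  ∑ j, (vandermonde φ x)⁻¹ i j * φ j y

variable {φ : ι → α → 𝕜} {x : ι → α}

theorem lagrange_mem_span (i : ι) : lagrange φ x i ∈ Submodule.span 𝕜 (Set.range φ) :=
  (Submodule.mem_span_range_iff_exists_fun 𝕜).2
    ⟨(vandermonde φ x)⁻¹ i, funext fun y => by simp [lagrange]⟩

theorem lagrange_apply_node (hV : IsUnit (vandermonde φ x).det) (i k : ι) :
    lagrange φ x i (x k) = if i = k then 1 else 0 := by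
  rw [← Matrix.one_apply, ← Matrix.nonsing_inv_mul _ hV, Matrix.mul_apply]
  rfl

theorem eq_zero_of_mem_span_of_apply_node_eq_zero (hV : IsUnit (vandermonde φ x).det)
    {f : α → 𝕜} (hf : f ∈ Submodule.span 𝕜 (Set.range φ)) (hfx : ∀ k, f (x k) = 0) : f = 0 := by
  obtain ⟨c, rfl⟩ := (Submodule.mem_span_range_iff_exists_fun 𝕜).1 hf
  have hc : Matrix.vecMul c (vandermonde φ x) = 0 := funext fun k => by
    simpa [Matrix.vecMul, dotProduct, vandermonde] using hfx k
  have : c = 0 := by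
    by_contra hc0
    exact hV.ne_zero (Matrix.exists_vecMul_eq_zero_iff.1 ⟨c, hc0, hc⟩)
  simp [this]

theorem lagrange_castSucc {n : ℕ} {φ : Fin (n + 1) → α → 𝕜} {x : Fin (n + 1) → α}
    (hV : IsUnit (vandermonde (φ ∘ Fin.castSucc) (x ∘ Fin.castSucc)).det)
    (hV' : IsUnit (vandermonde φ x).det) (i : Fin n) :
    lagrange φ x i.castSucc = lagrange (φ ∘ Fin.castSucc) (x ∘ Fin.castSucc) i -
      lagrange (φ ∘ Fin.castSucc) (x ∘ Fin.castSucc) i (x (Fin.last n)) •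
        lagrange φ x (Fin.last n) := by
  have hspan : Submodule.span 𝕜 (Set.range (φ ∘ Fin.castSucc)) ≤
      Submodule.span 𝕜 (Set.range φ) :=
    Submodule.span_mono (Set.range_comp_subset_range _ _)
  refine (sub_eq_zero.1 (eq_zero_of_mem_span_of_apply_node_eq_zero hV' ?_ fun k => ?_)).symm
  · exact Submodule.sub_mem _ (Submodule.sub_mem _ (hspan (lagrange_mem_span i))
      (Submodule.smul_mem _ _ (lagrange_mem_span _))) (lagrange_mem_span _)
  · rcases Fin.eq_castSucc_or_eq_last k with ⟨k, rfl⟩ | rfl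
    · have := lagrange_apply_node hV i k
      simp only [Function.comp_apply] at this
      simp [lagrange_apply_node hV', this, (Fin.castSucc_lt_last k).ne']
    · simp [lagrange_apply_node hV', (Fin.castSucc_lt_last i).ne]

end Field

section Lebesgue

variable {ι α : Type*} [Fintype ι] [DecidableEq ι]

noncomputable def lebesgueFun (φ : ι → α → ℝ) (x : ι → α) (y : α) : ℝ :=
  ∑ i, |lagrange φ x i y|

theorem continuous_lagrange [TopologicalSpace α] {φ : ι → α → ℝ} (hφ : ∀ j, Continuous (φ j))
    (x : ι → α) (i : ι) : Continuous (lagrange φ x i) :=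
  continuous_finsetSum _ fun j _ => continuous_const.mul (hφ j)

theorem continuous_lebesgueFun [TopologicalSpace α] {φ : ι → α → ℝ}
    (hφ : ∀ j, Continuous (φ j)) (x : ι → α) : Continuous (lebesgueFun φ x) :=
  continuous_finsetSum _ fun i _ => (continuous_lagrange hφ x i).abs

theorem lebesgueFun_le {n : ℕ} {φ : Fin (n + 1) → α → ℝ} {x : Fin (n + 1) → α}
    (hV : IsUnit (vandermonde (φ ∘ Fin.castSucc) (x ∘ Fin.castSucc)).det)
    (hV' : IsUnit (vandermonde φ x).det) (y : α) :
    lebesgueFun φ x y ≤ lebesgueFun (φ ∘ Fin.castSucc) (x ∘ Fin.castSucc) y +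
      |lagrange φ x (Fin.last n) y| *
        (1 + lebesgueFun (φ ∘ Fin.castSucc) (x ∘ Fin.castSucc) (x (Fin.last n))) := by
  set ℓ := lagrange (φ ∘ Fin.castSucc) (x ∘ Fin.castSucc)
  set ℓn := lagrange φ x (Fin.last n) y
  have hterm : ∀ i, |lagrange φ x i.castSucc y| ≤ |ℓ i y| + |ℓn| * |ℓ i (x (Fin.last n))| :=
    fun i => by
      rw [lagrange_castSucc hV hV', Pi.sub_apply, Pi.smul_apply, smul_eq_mul, mul_comm,
        ← abs_mul]
      exact abs_sub _ _
  calc lebesgueFun φ x y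
      = ∑ i : Fin n, |lagrange φ x i.castSucc y| + |ℓn| := Fin.sum_univ_castSucc _
    _ ≤ ∑ i, (|ℓ i y| + |ℓn| * |ℓ i (x (Fin.last n))|) + |ℓn| := by
      gcongr with i; exact hterm i
    _ = _ := by
      rw [Finset.sum_add_distrib, ← Finset.mul_sum, lebesgueFun, lebesgueFun]
      ring

end Lebesgue

end Interpolation

open Interpolation

theorem stmt_5_general
    (d n : ℕ)
    (x : Fin (n + 1) → (Fin d → ℝ))
    (φ : Fin (n + 1) → MvPolynomial (Fin d) ℝ)
    (K : Set (Fin d → ℝ))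
    (hK : K = convexHull ℝ (Set.range fun i : Fin n => x i.castSucc))
    (hxK : x (Fin.last n) ∈ K)
    (V : Matrix (Fin n) (Fin n) ℝ)
    (hV : ∀ i j, V i j = eval (x j.castSucc) (φ i.castSucc))
    (hdet : V.det ≠ 0)
    (V' : Matrix (Fin (n + 1)) (Fin (n + 1)) ℝ)
    (hV' : ∀ i j, V' i j = eval (x j) (φ i))
    (hdet' : V'.det ≠ 0)
    (ℓ : Fin n → (Fin d → ℝ) → ℝ)
    (hℓ : ∀ i y, ℓ i y = ∑ j, V⁻¹ i j * eval y (φ j.castSucc))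
    (ℓ' : Fin (n + 1) → (Fin d → ℝ) → ℝ)
    (hℓ' : ∀ i y, ℓ' i y = ∑ j, V'⁻¹ i j * eval y (φ j))
    (Λ Λ' : ℝ)
    (hΛ : Λ = ⨆ y : K, ∑ i, |ℓ i (y : Fin d → ℝ)|)
    (hΛ' : Λ' = ⨆ y : K, ∑ i, |ℓ' i (y : Fin d → ℝ)|) :
    Λ' ≤ Λ + (⨆ y : K, |ℓ' (Fin.last n) (y : Fin d → ℝ)|) * (1 + Λ) := by
  set ψ : Fin (n + 1) → (Fin d → ℝ) → ℝ := fun j y => eval y (φ j)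
  have hψ : ∀ j, Continuous (ψ j) := fun j => continuous_eval (φ j)
  obtain rfl : V = vandermonde (ψ ∘ Fin.castSucc) (x ∘ Fin.castSucc) := Matrix.ext hV
  obtain rfl : V' = vandermonde ψ x := Matrix.ext hV'
  obtain rfl : ℓ = lagrange (ψ ∘ Fin.castSucc) (x ∘ Fin.castSucc) := funext₂ hℓ
  obtain rfl : ℓ' = lagrange ψ x := funext₂ hℓ'
  have hKc : IsCompact K := hK ▸ (Set.finite_range _).isCompact_convexHull ℝ
  have : Nonempty K := ⟨⟨_, hxK⟩⟩
  have hΛle : ∀ y ∈ K, lebesgueFun (ψ ∘ Fin.castSucc) (x ∘ Fin.castSucc) y ≤ Λ := fun y hy =>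
    hΛ ▸ hKc.le_iSup_of_continuous (continuous_lebesgueFun (fun j => hψ _) _) hy
  have hM : ∀ y ∈ K, |lagrange ψ x (Fin.last n) y| ≤ ⨆ z : K, |lagrange ψ x (Fin.last n) z| :=
    fun y hy => hKc.le_iSup_of_continuous (continuous_lagrange hψ x _).abs hy
  rw [hΛ']
  refine ciSup_le fun ⟨y, hy⟩ => (lebesgueFun_le hdet.isUnit hdet'.isUnit y).trans ?_
  have hM_nonneg := (abs_nonneg _).trans (hM y hy)
  gcongr
  · exact hΛle y hy
  · exact add_nonneg zero_le_one (Finset.sum_nonneg fun _ _ => abs_nonneg _)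
  · exact hM y hy
  · exact hΛle _ hxK

/-- Proposition 3.3, first inequality: the Lebesgue constant of the extended interpolation
system satisfies `Λ' ≤ Λ + ‖ℓ'_{n+1}‖_{L∞(K)} * (1 + Λ)`. -/
theorem stmt_5
    (d n : ℕ) (hd : 0 < d) (hn : 0 < n)
    (x : Fin (n + 1) → (Fin d → ℝ)) (hx : Function.Injective x)
    (φ : Fin (n + 1) → MvPolynomial (Fin d) ℝ)
    (K : Set (Fin d → ℝ))
    (hK : K = convexHull ℝ (Set.range fun i : Fin n => x i.castSucc))
    (hxK : x (Fin.last n) ∈ K)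
    (V : Matrix (Fin n) (Fin n) ℝ)
    (hV : ∀ i j, V i j = eval (x j.castSucc) (φ i.castSucc))
    (hdet : V.det ≠ 0)
    (V' : Matrix (Fin (n + 1)) (Fin (n + 1)) ℝ)
    (hV' : ∀ i j, V' i j = eval (x j) (φ i))
    (hdet' : V'.det ≠ 0)
    (ℓ : Fin n → (Fin d → ℝ) → ℝ)
    (hℓ : ∀ i y, ℓ i y = ∑ j, V⁻¹ i j * eval y (φ j.castSucc))
    (ℓ' : Fin (n + 1) → (Fin d → ℝ) → ℝ)
    (hℓ' : ∀ i y, ℓ' i y = ∑ j, V'⁻¹ i j * eval y (φ j))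
    (Λ Λ' : ℝ)
    (hΛ : Λ = ⨆ y : K, ∑ i, |ℓ i (y : Fin d → ℝ)|)
    (hΛ' : Λ' = ⨆ y : K, ∑ i, |ℓ' i (y : Fin d → ℝ)|) :
    Λ' ≤ Λ + (⨆ y : K, |ℓ' (Fin.last n) (y : Fin d → ℝ)|) * (1 + Λ) :=
  stmt_5_general d n x φ K hK hxK V hV hdet V' hV' hdet' ℓ hℓ ℓ' hℓ' Λ Λ' hΛ hΛ'
end

section
/- For every x ∈ K, the modulus of the determinant of the matrix obtained from V' by replacing its (n+1)-th column with [φ₁(x),…,φ_{n+1}(x)]ᵀ is bounded by |det V| · ‖φ_{n+1}‖_{L∞(K)} · (1 + Λ). -/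
open MvPolynomial

/-!
The replaced column `(φᵢ(y))ᵢ` agrees in its first `n` entries with `V` applied to `(ℓⱼ(y))ⱼ`.
Subtracting `∑ⱼ ℓⱼ(y) · (column j)` therefore leaves only the last entry
`φ_{n+1}(y) - ∑ⱼ ℓⱼ(y) φ_{n+1}(xⱼ)`, the interpolation error of `φ_{n+1}` at `y`, so the determinant
is this error times `det V`. The error is at most `‖φ_{n+1}‖ (1 + Λ)` because all of `y, x₁, …, xₙ`
lie in `K`.
-/

namespace Matrix

variable {R : Type*} [CommRing R] {n : ℕ}

theorem det_updateCol_last_single_one (M : Matrix (Fin (n + 1)) (Fin (n + 1)) R) :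
    (M.updateCol (Fin.last n) (Pi.single (Fin.last n) 1)).det =
      (M.submatrix Fin.castSucc Fin.castSucc).det := by
  rw [det_succ_column _ (Fin.last n), Fintype.sum_eq_single (Fin.last n)]
  · simp [Fin.succAbove_last, submatrix]
  · intro i hi
    simp [Pi.single_eq_of_ne hi]

/-- Schur-complement expansion of a bordered determinant. -/
theorem det_eq_mul_det_submatrix_castSucc (M : Matrix (Fin (n + 1)) (Fin (n + 1)) R)
    (w : Fin n → R)
    (hw : M.submatrix Fin.castSucc Fin.castSucc *ᵥ w = fun i => M i.castSucc (Fin.last n)) :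
    M.det = (M (Fin.last n) (Fin.last n) - ∑ j, M (Fin.last n) j.castSucc * w j) *
      (M.submatrix Fin.castSucc Fin.castSucc).det := by
  set N := M.updateCol (Fin.last n) (Pi.single (Fin.last n) 1)
  set c := M (Fin.last n) (Fin.last n) - ∑ j, M (Fin.last n) j.castSucc * w j
  have hM : M = N.updateCol (Fin.last n)
      fun k => ∑ i, (Fin.snoc w c : Fin (n + 1) → R) i • N k i := by
    ext k l
    induction l using Fin.lastCases with
    | last =>
      induction k using Fin.lastCases with
      | last =>
        simp only [N, c, updateCol_self, Fin.sum_univ_castSucc, Fin.snoc_castSucc, Fin.snoc_last,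
          updateCol_ne (Fin.castSucc_lt_last _).ne, Pi.single_eq_same, smul_eq_mul, mul_comm (w _)]
        ring
      | cast k =>
        have hk := congrFun hw k
        simp only [mulVec, dotProduct, submatrix_apply] at hk
        simp [N, Fin.sum_univ_castSucc, ← hk, mul_comm]
    | cast l => simp [N]
  conv_lhs => rw [hM]
  rw [det_updateCol_sum, Fin.snoc_last, det_updateCol_last_single_one, smul_eq_mul]

end Matrix

theorem le_ciSup_of_isCompact {X α : Type*} [TopologicalSpace X] [ConditionallyCompleteLinearOrder α]
    [TopologicalSpace α] [ClosedIciTopology α] {K : Set X} (hK : IsCompact K) {f : X → α}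
    (hf : ContinuousOn f K) {z : X} (hz : z ∈ K) : f z ≤ ⨆ y : K, f y :=
  have : Nonempty α := ⟨f z⟩
  le_ciSup (by simpa [Set.image_eq_range] using hK.bddAbove_image hf) (⟨z, hz⟩ : K)

theorem abs_sub_sum_mul_le {ι : Type*} [Fintype ι] {a S L : ℝ} {b w : ι → ℝ}
    (ha : |a| ≤ S) (hb : ∀ j, |b j| ≤ S) (hw : ∑ j, |w j| ≤ L) :
    |a - ∑ j, b j * w j| ≤ S * (1 + L) :=
  calc |a - ∑ j, b j * w j| ≤ |a| + ∑ j, |b j| * |w j| := by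
        grw [abs_sub, Finset.abs_sum_le_sum_abs]
        simp only [abs_mul, le_refl]
    _ ≤ S + ∑ j, S * |w j| := by gcongr with j; exact hb j
    _ ≤ S * (1 + L) := by
        rw [← Finset.mul_sum]
        nlinarith [(abs_nonneg a).trans ha]

theorem stmt_8_general
    (d n : ℕ)
    (x : Fin (n + 1) → (Fin d → ℝ))
    (φ : Fin (n + 1) → MvPolynomial (Fin d) ℝ)
    (K : Set (Fin d → ℝ))
    (hK : K = convexHull ℝ (Set.range fun i : Fin n => x i.castSucc))
    (V : Matrix (Fin n) (Fin n) ℝ)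
    (hV : ∀ i j, V i j = eval (x j.castSucc) (φ i.castSucc))
    (hdet : V.det ≠ 0)
    (V' : Matrix (Fin (n + 1)) (Fin (n + 1)) ℝ)
    (hV' : ∀ i j, V' i j = eval (x j) (φ i))
    (ℓ : Fin n → (Fin d → ℝ) → ℝ)
    (hℓ : ∀ i y, ℓ i y = ∑ j, V⁻¹ i j * eval y (φ j.castSucc))
    (Λ : ℝ)
    (hΛ : Λ = ⨆ y : K, ∑ i, |ℓ i (y : Fin d → ℝ)|) :
    ∀ y ∈ K,
      |(V'.updateCol (Fin.last n) (fun i => eval y (φ i))).det| ≤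
        |V.det| * (⨆ z : K, |eval (z : Fin d → ℝ) (φ (Fin.last n))|) * (1 + Λ) := by
  intro y hy
  have hKc : IsCompact K := hK ▸ (Set.finite_range _).isCompact_convexHull ℝ
  have hxK (j : Fin n) : x j.castSucc ∈ K := hK ▸ subset_convexHull ℝ _ ⟨j, rfl⟩
  obtain rfl : ℓ = fun i y => ∑ j, V⁻¹ i j * eval y (φ j.castSucc) := funext₂ hℓ
  set M := V'.updateCol (Fin.last n) fun i => eval y (φ i)
  have hMV : M.submatrix Fin.castSucc Fin.castSucc = V := by
    ext i j
    simp [M, hV', hV]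
  have hℓV : V.mulVec (fun j => ∑ k, V⁻¹ j k * eval y (φ k.castSucc)) =
      fun i => M i.castSucc (Fin.last n) := by
    change V.mulVec (V⁻¹.mulVec _) = _
    rw [Matrix.mulVec_mulVec, Matrix.mul_nonsing_inv _ hdet.isUnit, Matrix.one_mulVec]
    simp [M]
  rw [M.det_eq_mul_det_submatrix_castSucc _ (hMV ▸ hℓV), hMV, abs_mul, mul_comm, mul_assoc]
  gcongr
  have hφK : ContinuousOn (fun z => |eval z (φ (Fin.last n))|) K :=
    (continuous_eval _).abs.continuousOn
  refine abs_sub_sum_mul_le ?_ (fun j => ?_) ?_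
  · simpa [M] using le_ciSup_of_isCompact hKc hφK hy
  · simpa [M, hV'] using le_ciSup_of_isCompact hKc hφK (hxK j)
  · have hΛK : ContinuousOn (fun z => ∑ j, |∑ k, V⁻¹ j k * eval z (φ k.castSucc)|) K :=
      (continuous_finsetSum _ fun j _ => (continuous_finsetSum _ fun k _ =>
        continuous_const.mul (continuous_eval _)).abs).continuousOn
    exact hΛ ▸ le_ciSup_of_isCompact hKc hΛK hy

/-- For every `y ∈ K`, the modulus of the determinant of the matrix obtained from `V'` by
replacing its `(n+1)`-th column with `[φ₁(y), …, φ_{n+1}(y)]ᵀ` is bounded by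
`|det V| * ‖φ_{n+1}‖_{L∞(K)} * (1 + Λ)`. -/
theorem stmt_8
    (d n : ℕ) (hd : 0 < d) (hn : 0 < n)
    (x : Fin (n + 1) → (Fin d → ℝ)) (hx : Function.Injective x)
    (φ : Fin (n + 1) → MvPolynomial (Fin d) ℝ)
    (K : Set (Fin d → ℝ))
    (hK : K = convexHull ℝ (Set.range fun i : Fin n => x i.castSucc))
    (V : Matrix (Fin n) (Fin n) ℝ)
    (hV : ∀ i j, V i j = eval (x j.castSucc) (φ i.castSucc))
    (hdet : V.det ≠ 0)
    (V' : Matrix (Fin (n + 1)) (Fin (n + 1)) ℝ)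
    (hV' : ∀ i j, V' i j = eval (x j) (φ i))
    (ℓ : Fin n → (Fin d → ℝ) → ℝ)
    (hℓ : ∀ i y, ℓ i y = ∑ j, V⁻¹ i j * eval y (φ j.castSucc))
    (Λ : ℝ)
    (hΛ : Λ = ⨆ y : K, ∑ i, |ℓ i (y : Fin d → ℝ)|) :
    ∀ y ∈ K,
      |(V'.updateCol (Fin.last n) (fun i => eval y (φ i))).det| ≤
        |V.det| * (⨆ z : K, |eval (z : Fin d → ℝ) (φ (Fin.last n))|) * (1 + Λ) :=
  stmt_8_general d n x φ K hK V hV hdet V' hV' ℓ hℓ Λ hΛ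
end

section
/- (Correctness of the Lagrange basis update formulas) Assume det V ≠ 0 and det V' ≠ 0. Then the denominator δ = φ_{n+1}(x_{n+1}) − Σ_{i=1}^n ℓ_i(x_{n+1}) φ_{n+1}(x_i) is nonzero (indeed δ = det V' / det V), and the functions defined by ℓ'_{n+1}(x) = ( φ_{n+1}(x) − Σ_{i=1}^n ℓ_i(x) φ_{n+1}(x_i) ) / δ and ℓ'_i(x) = ℓ_i(x) − ℓ'_{n+1}(x) · ℓ_i(x_{n+1}) for 1 ≤ i ≤ n satisfy the Kronecker property ℓ'_i(x_j) = δ_{i,j} for all 1 ≤ i, j ≤ n+1; consequently they coincide with the Lagrange basis functions Σ_{j=1}^{n+1} (V'⁻¹)_{i,j} φ_j of the extended system. -/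
/-!
In block form `V' = [[V, B], [C, D]]` the denominator `δ` is the Schur complement `D - C V⁻¹ B`,
so `det V' = det V * δ`. The updated functions are linear combinations of the `φ_i`, and a
function in their span is recovered from its values at the nodes through `V'⁻¹`; the Kronecker
property therefore identifies the updated functions with the Lagrange basis of `V'`.
-/

open MvPolynomial

open Matrix

theorem Matrix.det_eq_det_submatrix_castSucc_mul_schur {R : Type*} [CommRing R] {n : ℕ}
    (A : Matrix (Fin (n + 1)) (Fin (n + 1)) R)
    (hA : IsUnit (A.submatrix Fin.castSucc Fin.castSucc).det) :
    A.det = (A.submatrix Fin.castSucc Fin.castSucc).det *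
      (A (Fin.last n) (Fin.last n) - ∑ i, ∑ j, A (Fin.last n) i.castSucc *
        (A.submatrix Fin.castSucc Fin.castSucc)⁻¹ i j * A j.castSucc (Fin.last n)) := by
  let := invertibleOfIsUnitDet _ hA
  have hlast : ∀ i : Fin 1, Fin.natAdd n i = Fin.last n := fun i => by
    rw [Fin.fin_one_eq_zero i]; rfl
  have h11 : (A.submatrix finSumFinEquiv finSumFinEquiv).toBlocks₁₁ =
      A.submatrix Fin.castSucc Fin.castSucc := rfl
  rw [← det_submatrix_equiv_self finSumFinEquiv, ← fromBlocks_toBlocks (A.submatrix _ _), h11,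
    det_fromBlocks₁₁, det_unique (n := Fin 1), invOf_eq_nonsing_inv, Finset.sum_comm]
  simp only [toBlocks₁₂, toBlocks₂₁, toBlocks₂₂, submatrix_apply, finSumFinEquiv_apply_left,
    finSumFinEquiv_apply_right, hlast, sub_apply, of_apply, mul_apply, Finset.sum_mul]
  rfl

section Interpolation

variable {ι X R : Type*} [Fintype ι] [DecidableEq ι] [CommRing R]
  {f : ι → X → R} {x : ι → X} {V : Matrix ι ι R}

theorem sum_inv_mul_apply_eq_ite (hV : ∀ i j, V i j = f i (x j)) (hdet : IsUnit V.det)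
    (i j : ι) : ∑ k, V⁻¹ i k * f k (x j) = if i = j then 1 else 0 := by
  simp_rw [← hV]
  rw [← mul_apply, nonsing_inv_mul _ hdet, one_apply]

theorem eq_sum_inv_mul_of_mem_span (hV : ∀ i j, V i j = f i (x j)) (hdet : IsUnit V.det)
    {g : X → R} (hg : g ∈ Submodule.span R (Set.range f)) (y : X) :
    g y = ∑ j, (∑ k, g (x k) * V⁻¹ k j) * f j y := by
  obtain ⟨c, rfl⟩ := (Submodule.mem_span_range_iff_exists_fun R).1 hg
  have hnodes : ∀ k, (∑ i, c i • f i) (x k) = (c ᵥ* V) k := fun k => by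
    simp [vecMul, dotProduct, hV]
  calc (∑ i, c i • f i) y = ∑ j, c j * f j y := by simp
    _ = ∑ j, (c ᵥ* V ᵥ* V⁻¹) j * f j y := by
      rw [vecMul_vecMul, mul_nonsing_inv _ hdet, vecMul_one]
    _ = ∑ j, (∑ k, (∑ i, c i • f i) (x k) * V⁻¹ k j) * f j y := by
      simp only [hnodes]
      rfl

theorem eq_sum_inv_mul_of_mem_span_of_apply_eq_ite (hV : ∀ i j, V i j = f i (x j))
    (hdet : IsUnit V.det) {g : X → R} (hg : g ∈ Submodule.span R (Set.range f)) {i : ι}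
    (hgx : ∀ k, g (x k) = if i = k then 1 else 0) (y : X) :
    g y = ∑ j, V⁻¹ i j * f j y := by
  simp [eq_sum_inv_mul_of_mem_span hV hdet hg y, hgx]

end Interpolation

section Update

variable {X K : Type*} [Field K] {n : ℕ} {x : Fin (n + 1) → X} {ℓ : Fin n → X → K}
  {g : X → K} {δ : K} {ℓ' : Fin (n + 1) → X → K}

theorem lagrangeUpdate_last_apply_castSucc
    (hℓ : ∀ i j, ℓ i (x j.castSucc) = if i = j then 1 else 0)
    (hlast : ∀ y, ℓ' (Fin.last n) y = (g y - ∑ i, ℓ i y * g (x i.castSucc)) / δ) (j : Fin n) :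
    ℓ' (Fin.last n) (x j.castSucc) = 0 := by
  simp [hlast, hℓ]

theorem lagrangeUpdate_last_apply_last
    (hδ : δ = g (x (Fin.last n)) - ∑ i, ℓ i (x (Fin.last n)) * g (x i.castSucc)) (hδ0 : δ ≠ 0)
    (hlast : ∀ y, ℓ' (Fin.last n) y = (g y - ∑ i, ℓ i y * g (x i.castSucc)) / δ) :
    ℓ' (Fin.last n) (x (Fin.last n)) = 1 := by
  rw [hlast, ← hδ, div_self hδ0]

theorem lagrangeUpdate_apply_eq_ite (hℓ : ∀ i j, ℓ i (x j.castSucc) = if i = j then 1 else 0)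
    (hδ : δ = g (x (Fin.last n)) - ∑ i, ℓ i (x (Fin.last n)) * g (x i.castSucc)) (hδ0 : δ ≠ 0)
    (hlast : ∀ y, ℓ' (Fin.last n) y = (g y - ∑ i, ℓ i y * g (x i.castSucc)) / δ)
    (hcast : ∀ i y, ℓ' i.castSucc y = ℓ i y - ℓ' (Fin.last n) y * ℓ i (x (Fin.last n)))
    (i j : Fin (n + 1)) : ℓ' i (x j) = if i = j then 1 else 0 := by
  have h0 := lagrangeUpdate_last_apply_castSucc hℓ hlast
  have h1 := lagrangeUpdate_last_apply_last hδ hδ0 hlast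
  induction i using Fin.lastCases with
  | last => induction j using Fin.lastCases with
    | last => simp [h1]
    | cast j => simp [h0, (Fin.castSucc_lt_last j).ne']
  | cast i => induction j using Fin.lastCases with
    | last => simp [hcast, h1, (Fin.castSucc_lt_last i).ne]
    | cast j => simp [hcast, h0, hℓ]

theorem lagrangeUpdate_mem (S : Submodule K (X → K)) (hℓS : ∀ i, ℓ i ∈ S) (hgS : g ∈ S)
    (hlast : ∀ y, ℓ' (Fin.last n) y = (g y - ∑ i, ℓ i y * g (x i.castSucc)) / δ)
    (hcast : ∀ i y, ℓ' i.castSucc y = ℓ i y - ℓ' (Fin.last n) y * ℓ i (x (Fin.last n)))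
    (i : Fin (n + 1)) : ℓ' i ∈ S := by
  have hlastS : ℓ' (Fin.last n) ∈ S := by
    have : ℓ' (Fin.last n) = δ⁻¹ • (g - ∑ i, g (x i.castSucc) • ℓ i) := by
      ext y
      simp [hlast, div_eq_inv_mul, mul_comm]
    rw [this]
    exact S.smul_mem _ (S.sub_mem hgS (S.sum_mem fun i _ => S.smul_mem _ (hℓS i)))
  induction i using Fin.lastCases with
  | last => exact hlastS
  | cast i =>
    have : ℓ' i.castSucc = ℓ i - ℓ i (x (Fin.last n)) • ℓ' (Fin.last n) := by
      ext y
      simp [hcast, mul_comm]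
    rw [this]
    exact S.sub_mem (hℓS i) (S.smul_mem _ hlastS)

end Update

theorem stmt_10_general
    (d n : ℕ)
    (x : Fin (n + 1) → (Fin d → ℝ))
    (φ : Fin (n + 1) → MvPolynomial (Fin d) ℝ)
    (V : Matrix (Fin n) (Fin n) ℝ)
    (hV : ∀ i j, V i j = eval (x j.castSucc) (φ i.castSucc))
    (hdet : V.det ≠ 0)
    (V' : Matrix (Fin (n + 1)) (Fin (n + 1)) ℝ)
    (hV' : ∀ i j, V' i j = eval (x j) (φ i))
    (hdet' : V'.det ≠ 0)
    (ℓ : Fin n → (Fin d → ℝ) → ℝ)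
    (hℓ : ∀ i y, ℓ i y = ∑ j, V⁻¹ i j * eval y (φ j.castSucc))
    (δ : ℝ)
    (hδ : δ = eval (x (Fin.last n)) (φ (Fin.last n)) -
      ∑ i : Fin n, ℓ i (x (Fin.last n)) * eval (x i.castSucc) (φ (Fin.last n)))
    (ℓ' : Fin (n + 1) → (Fin d → ℝ) → ℝ)
    (hℓ'last : ∀ y, ℓ' (Fin.last n) y =
      (eval y (φ (Fin.last n)) -
        ∑ i : Fin n, ℓ i y * eval (x i.castSucc) (φ (Fin.last n))) / δ)
    (hℓ'cast : ∀ (i : Fin n) (y : Fin d → ℝ),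
      ℓ' i.castSucc y = ℓ i y - ℓ' (Fin.last n) y * ℓ i (x (Fin.last n))) :
    δ ≠ 0 ∧ δ = V'.det / V.det ∧
      (∀ i j : Fin (n + 1), ℓ' i (x j) = if i = j then 1 else 0) ∧
      (∀ (i : Fin (n + 1)) (y : Fin d → ℝ), ℓ' i y = ∑ j, V'⁻¹ i j * eval y (φ j)) := by
  have hsub : V'.submatrix Fin.castSucc Fin.castSucc = V := Matrix.ext fun i j => by
    rw [submatrix_apply, hV, hV']
  have hℓx : ∀ i j, ℓ i (x j.castSucc) = if i = j then 1 else 0 := fun i j => by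
    rw [hℓ]
    simpa using sum_inv_mul_apply_eq_ite (f := fun i y => eval y (φ i.castSucc))
      (x := fun j => x j.castSucc) hV hdet.isUnit i j
  have hdetV' : V'.det = V.det * δ := by
    rw [V'.det_eq_det_submatrix_castSucc_mul_schur (hsub ▸ hdet.isUnit), hsub, hδ]
    simp [hℓ, hV', Finset.mul_sum, mul_comm, mul_left_comm]
  have hδ0 : δ ≠ 0 := by
    rintro rfl
    exact hdet' (by rw [hdetV', mul_zero])
  have hℓ'x := lagrangeUpdate_apply_eq_ite hℓx hδ hδ0 hℓ'last hℓ'cast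
  have hℓ'span : ∀ i, ℓ' i ∈ Submodule.span ℝ (Set.range fun i y => eval y (φ i)) := by
    refine lagrangeUpdate_mem _ (fun i => ?_) (Submodule.subset_span ⟨Fin.last n, rfl⟩)
      hℓ'last hℓ'cast
    exact Submodule.span_mono (Set.range_comp_subset_range Fin.castSucc _)
      ((Submodule.mem_span_range_iff_exists_fun ℝ).2 ⟨V⁻¹ i, funext fun y => by simp [hℓ]⟩)
  refine ⟨hδ0, by rw [hdetV', mul_div_cancel_left₀ _ hdet], hℓ'x, fun i => ?_⟩
  exact eq_sum_inv_mul_of_mem_span_of_apply_eq_ite hV' hdet'.isUnit (hℓ'span i) (hℓ'x i)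

/-- Correctness of the Lagrange basis update formulas: if `det V ≠ 0` and `det V' ≠ 0`, then
the denominator `δ = φ_{n+1}(x_{n+1}) − ∑ i, ℓ i (x_{n+1}) * φ_{n+1}(x i)` is nonzero
(indeed `δ = det V' / det V`), and the updated functions
`ℓ'_{n+1} = (φ_{n+1} − ∑ i, ℓ i • φ_{n+1}(x i)) / δ` and
`ℓ'_i = ℓ_i − ℓ'_{n+1} · ℓ_i(x_{n+1})` satisfy the Kronecker property and hence coincide with
the Lagrange basis functions `∑ j, (V'⁻¹)_{i,j} φ_j` of the extended system. -/
theorem stmt_10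
    (d n : ℕ) (hd : 0 < d) (hn : 0 < n)
    (x : Fin (n + 1) → (Fin d → ℝ)) (hx : Function.Injective x)
    (φ : Fin (n + 1) → MvPolynomial (Fin d) ℝ)
    (V : Matrix (Fin n) (Fin n) ℝ)
    (hV : ∀ i j, V i j = eval (x j.castSucc) (φ i.castSucc))
    (hdet : V.det ≠ 0)
    (V' : Matrix (Fin (n + 1)) (Fin (n + 1)) ℝ)
    (hV' : ∀ i j, V' i j = eval (x j) (φ i))
    (hdet' : V'.det ≠ 0)
    (ℓ : Fin n → (Fin d → ℝ) → ℝ)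
    (hℓ : ∀ i y, ℓ i y = ∑ j, V⁻¹ i j * eval y (φ j.castSucc))
    (δ : ℝ)
    (hδ : δ = eval (x (Fin.last n)) (φ (Fin.last n)) -
      ∑ i : Fin n, ℓ i (x (Fin.last n)) * eval (x i.castSucc) (φ (Fin.last n)))
    (ℓ' : Fin (n + 1) → (Fin d → ℝ) → ℝ)
    (hℓ'last : ∀ y, ℓ' (Fin.last n) y =
      (eval y (φ (Fin.last n)) -
        ∑ i : Fin n, ℓ i y * eval (x i.castSucc) (φ (Fin.last n))) / δ)
    (hℓ'cast : ∀ (i : Fin n) (y : Fin d → ℝ),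
      ℓ' i.castSucc y = ℓ i y - ℓ' (Fin.last n) y * ℓ i (x (Fin.last n))) :
    δ ≠ 0 ∧ δ = V'.det / V.det ∧
      (∀ i j : Fin (n + 1), ℓ' i (x j) = if i = j then 1 else 0) ∧
      (∀ (i : Fin (n + 1)) (y : Fin d → ℝ), ℓ' i y = ∑ j, V'⁻¹ i j * eval y (φ j)) :=
  stmt_10_general d n x φ V hV hdet V' hV' hdet' ℓ hℓ δ hδ ℓ' hℓ'last hℓ'cast
end
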